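/- arXiv:1203.3778 — 3 statements merged into one kernel-verified Lean document; each statement's English description precedes it below -/
import Mathlib

section
/- There exists a constant C' = C'(r) > 0 such that for every n ≥ 2 and every x ∈ ℝʳ: if |Σ_{j=1}^r C(k, j−i) x_j| ≤ 1 for all 1 ≤ i ≤ r and all 0 ≤ k < n, then |x_j| ≤ C' · n^{-(j-1)} for every 1 ≤ j ≤ r. -/
open Polynomial Finset fwdDiff

lemma coeff_comp_X_add_one (P : ℝ[X]) (N k : ℕ) (hN : P.natDegree < N) :
    (P.comp (X + 1)).coeff k = ∑ i ∈ range N, P.coeff i * (i.choose k : ℝ) := by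
  conv_lhs => rw [P.as_sum_range' N hN]
  rw [show ((∑ i ∈ range N, (monomial i) (P.coeff i)).comp (X + 1) : ℝ[X])
      = ∑ i ∈ range N, ((monomial i) (P.coeff i)).comp (X + 1) from
    map_sum (compRingHom (X + 1)) _ _]
  rw [finset_sum_coeff]
  refine Finset.sum_congr rfl fun i _ => ?_
  rw [monomial_comp, coeff_C_mul, coeff_X_add_one_pow]

lemma coeff_comp_C_mul_X (P : ℝ[X]) (c : ℝ) (k : ℕ) :
    (P.comp (C c * X)).coeff k = c ^ k * P.coeff k := by
  by_cases hk : k < P.natDegree + 1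
  · conv_lhs => rw [P.as_sum_range]
    rw [show ((∑ i ∈ range (P.natDegree + 1), (monomial i) (P.coeff i)).comp (C c * X) : ℝ[X])
        = ∑ i ∈ range (P.natDegree + 1), ((monomial i) (P.coeff i)).comp (C c * X) from
      map_sum (compRingHom (C c * X)) _ _]
    rw [finset_sum_coeff]
    rw [Finset.sum_eq_single k]
    · rw [monomial_comp, mul_pow, ← C_pow, ← mul_assoc, ← C_mul, ← monomial_zero_left,
        monomial_mul_X_pow, zero_add, coeff_monomial, if_pos rfl, mul_comm]
    · intro i _ hik
      rw [monomial_comp, mul_pow, ← C_pow, ← mul_assoc, ← C_mul, ← monomial_zero_left,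
        monomial_mul_X_pow, zero_add, coeff_monomial, if_neg hik]
    · intro h; exact absurd (mem_range.2 hk) h
  · push_neg at hk
    rw [P.coeff_eq_zero_of_natDegree_lt (by omega), mul_zero]
    apply Polynomial.coeff_eq_zero_of_natDegree_lt
    calc (P.comp (C c * X)).natDegree ≤ P.natDegree * (C c * X).natDegree := natDegree_comp_le
    _ ≤ P.natDegree * 1 := Nat.mul_le_mul_left _ (natDegree_C_mul_le c X |>.trans (by simp))
    _ < k := by omega

lemma fwdDiff_iter_poly (m : ℕ) : ∀ P : ℝ[X], P.natDegree ≤ m →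
    (fwdDiff (1:ℕ))^[m] (fun s : ℕ => P.eval (s : ℝ)) 0 = m.factorial * P.coeff m := by
  induction m with
  | zero =>
    intro P hP
    simp only [Function.iterate_zero, id_eq, Nat.cast_zero, Nat.factorial_zero, Nat.cast_one,
      one_mul, coeff_zero_eq_eval_zero]
  | succ m IH =>
    intro P hP
    set Q : ℝ[X] := P.comp (X + 1) - P with hQ
    have hc : ∀ k, Q.coeff k = (∑ i ∈ range (m + 2), P.coeff i * (i.choose k : ℝ)) - P.coeff k := by
      intro k
      rw [hQ, coeff_sub, coeff_comp_X_add_one P (m + 2) k (by omega)]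
    have hQm : Q.coeff m = (m + 1 : ℝ) * P.coeff (m + 1) := by
      rw [hc, sum_range_succ, sum_range_succ, Finset.sum_eq_zero (fun i hi => by
        rw [Nat.choose_eq_zero_of_lt (mem_range.1 hi), Nat.cast_zero, mul_zero])]
      rw [Nat.choose_self, Nat.choose_succ_self_right]
      push_cast
      ring
    have hQdeg : Q.natDegree ≤ m := by
      rw [natDegree_le_iff_coeff_eq_zero]
      intro N hN
      rw [hc, sub_eq_zero]
      by_cases hN2 : N < m + 2
      · rw [Finset.sum_eq_single_of_mem N (mem_range.2 hN2)]
        · rw [Nat.choose_self, Nat.cast_one, mul_one]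
        · intro i hi hiN
          have : i < N := by
            have := mem_range.1 hi; omega
          rw [Nat.choose_eq_zero_of_lt this, Nat.cast_zero, mul_zero]
      · rw [Finset.sum_eq_zero (fun i hi => by
          rw [Nat.choose_eq_zero_of_lt (by have := mem_range.1 hi; omega), Nat.cast_zero,
            mul_zero]),
          P.coeff_eq_zero_of_natDegree_lt (by omega)]
    have hfun : fwdDiff (1:ℕ) (fun s : ℕ => P.eval (s : ℝ)) = fun s : ℕ => Q.eval (s : ℝ) := by
      funext s
      simp only [fwdDiff, hQ, eval_sub, eval_comp, eval_add, eval_X, eval_one]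
      push_cast
      ring_nf
    rw [Function.iterate_succ_apply, hfun, IH Q hQdeg, hQm]
    rw [Nat.factorial_succ]
    push_cast
    ring

lemma fwdDiff_bound (m : ℕ) (f : ℕ → ℝ) (B : ℝ) (hf : ∀ k, k ≤ m → |f k| ≤ B) :
    |(fwdDiff (1:ℕ))^[m] f 0| ≤ 2^m * B := by
  rw [fwdDiff_iter_eq_sum_shift]
  refine le_trans (Finset.abs_sum_le_sum_abs _ _) ?_
  have hterm : ∀ k ∈ range (m+1),
      |((-1:ℤ)^(m-k) * m.choose k) • f (0 + k • 1)| ≤ (m.choose k : ℝ) * B := by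
    intro k hk
    rw [zsmul_eq_mul, abs_mul, show (0 + k • 1 : ℕ) = k by simp]
    have habs : |(((-1:ℤ)^(m-k) * m.choose k : ℤ) : ℝ)| = (m.choose k : ℝ) := by
      push_cast
      rw [abs_mul, abs_pow, abs_neg, abs_one, one_pow, one_mul, Nat.abs_cast]
    rw [habs]
    exact mul_le_mul_of_nonneg_left (hf k (by simpa using Nat.lt_succ_iff.1 (mem_range.1 hk)))
      (by positivity)
  refine le_trans (Finset.sum_le_sum hterm) ?_
  rw [← Finset.sum_mul, show (∑ k ∈ range (m+1), (m.choose k:ℝ)) = 2^m by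
    exact_mod_cast congrArg (Nat.cast : ℕ → ℝ) (Nat.sum_range_choose m)]

lemma key_eval (h m j : ℕ) (hjm : j ≤ m) :
    (fwdDiff (1:ℕ))^[m] (fun s : ℕ => ((s * h).choose j : ℝ)) 0
      = if j = m then (h:ℝ)^m else 0 := by
  set P : ℝ[X] := (descPochhammer ℝ j).comp (C (h:ℝ) * X) with hP
  have hX1 : (C (h:ℝ) * X).natDegree ≤ 1 := le_trans (natDegree_C_mul_le _ _) (by simp)
  have hPdeg : P.natDegree ≤ j := by
    refine le_trans natDegree_comp_le (le_trans (Nat.mul_le_mul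
      (le_of_eq (descPochhammer_natDegree (R := ℝ) j)) hX1) (by omega))
  have hfun : (fun s : ℕ => ((s*h).choose j : ℝ))
      = (j.factorial : ℝ)⁻¹ • (fun s : ℕ => P.eval (s:ℝ)) := by
    funext s
    rw [Pi.smul_apply, smul_eq_mul, hP, eval_comp, eval_mul, eval_C, eval_X,
      show ((h:ℝ) * (s:ℝ)) = ((h*s : ℕ) : ℝ) by push_cast; ring,
      descPochhammer_eval_eq_descFactorial, Nat.descFactorial_eq_factorial_mul_choose]
    push_cast
    rw [mul_comm (s:ℕ) h, inv_mul_cancel_left₀ (Nat.cast_ne_zero.2 j.factorial_ne_zero)]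
  rw [hfun, fwdDiff_iter_const_smul, Pi.smul_apply, smul_eq_mul,
    fwdDiff_iter_poly m P (hPdeg.trans hjm), coeff_comp_C_mul_X]
  by_cases hj : j = m
  · subst hj
    have hlc : (descPochhammer ℝ j).coeff j = 1 := by
      have := (monic_descPochhammer (R := ℝ) j).coeff_natDegree
      rwa [descPochhammer_natDegree] at this
    rw [if_pos rfl, hlc, mul_one, inv_mul_cancel_left₀ (Nat.cast_ne_zero.2 j.factorial_ne_zero)]
  · rw [if_neg hj, Polynomial.coeff_eq_zero_of_natDegree_lt
      (by rw [descPochhammer_natDegree]; omega), mul_zero, mul_zero, mul_zero]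

theorem jordan_entries_small (r : ℕ) :
    ∃ C' : ℝ, 0 < C' ∧ ∀ n : ℕ, 2 ≤ n → ∀ x : Fin r → ℝ,
      (∀ i : Fin r, ∀ k : ℕ, k < n →
        |∑ j : Fin r,
            (if (i : ℕ) ≤ (j : ℕ) then (Nat.choose k ((j : ℕ) - (i : ℕ)) : ℝ) else 0)
              * x j| ≤ 1) →
      ∀ j : Fin r, |x j| ≤ C' / (n : ℝ) ^ (j : ℕ) := by
  classical
  set A : ℝ := 2^r * (1 + (r:ℝ)^(r+1)) with hA
  have hA1 : (1:ℝ) ≤ A := by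
    have h1 : (1:ℝ) ≤ 2^r := one_le_pow₀ (by norm_num)
    have h2 : (0:ℝ) ≤ (r:ℝ)^(r+1) := by positivity
    nlinarith
  have hA0 : (0:ℝ) < A := lt_of_lt_of_le one_pos hA1
  refine ⟨A^r * (2*r+1)^r + ((4*r^2+1:ℕ):ℝ)^r + 1, by positivity, ?_⟩
  intro n hn x hx j
  have hr : 0 < r := j.pos
  have hnpos : (0:ℝ) < (n : ℝ)^(j:ℕ) := by positivity
  have hjr : (j:ℕ) < r := j.2
  -- trivial bound |x i| ≤ 1
  have hx1 : ∀ i : Fin r, |x i| ≤ 1 := by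
    intro i
    have h0 := hx i 0 (by omega)
    have : ∑ l : Fin r,
        (if (i : ℕ) ≤ (l : ℕ) then (Nat.choose 0 ((l : ℕ) - (i : ℕ)) : ℝ) else 0) * x l
        = x i := by
      rw [Finset.sum_eq_single i]
      · simp
      · intro l _ hli
        rcases le_or_gt (i:ℕ) (l:ℕ) with hle | hlt
        · have : (l:ℕ) - (i:ℕ) ≠ 0 := by
            have : (i:ℕ) ≠ (l:ℕ) := fun e => hli (Fin.ext e.symm)
            omega
          rw [if_pos hle, Nat.choose_eq_zero_of_lt (by omega), Nat.cast_zero, zero_mul]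
        · rw [if_neg (by omega), zero_mul]
      · intro hi; exact absurd (Finset.mem_univ i) hi
    rwa [this] at h0
  by_cases hsm : n ≤ 4*r^2
  · -- small n: use |x j| ≤ 1
    rw [le_div_iff₀ hnpos]
    have h1 : (n:ℝ)^(j:ℕ) ≤ ((4*r^2+1:ℕ):ℝ)^r := by
      have : n^(j:ℕ) ≤ (4*r^2+1)^r := le_trans (Nat.pow_le_pow_left (by omega) _)
        (Nat.pow_le_pow_right (by omega) (by omega))
      exact_mod_cast this
    calc |x j| * (n:ℝ)^(j:ℕ) ≤ 1 * ((4*r^2+1:ℕ):ℝ)^r := by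
          exact mul_le_mul (hx1 j) h1 (by positivity) (by norm_num)
      _ ≤ A^r * (2*r+1)^r + ((4*r^2+1:ℕ):ℝ)^r + 1 := by
          have : (0:ℝ) ≤ A^r * (2*r+1)^r := by positivity
          linarith
  · push_neg at hsm
    set h := (n-1)/r with hhdef
    have hh1 : 1 ≤ h := by
      rw [hhdef]
      have hr4 : r ≤ 4*r^2 := by nlinarith
      exact (Nat.one_le_div_iff (by omega)).2 (by omega)
    have hsh : ∀ s, s ≤ r - 1 → s * h < n := by
      intro s hs
      have h1 : h * r ≤ n - 1 := Nat.div_mul_le_self (n-1) r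
      calc s * h ≤ r * h := Nat.mul_le_mul_right h (by omega)
        _ = h * r := mul_comm r h
        _ ≤ n - 1 := h1
        _ < n := by omega
    have hnh : n ≤ 2 * r * h := by
      have e := Nat.div_add_mod (n-1) r
      have m1 : (n-1) % r < r := Nat.mod_lt _ (by omega)
      have h2 : n ≤ r * h + r := by
        rw [hhdef]
        omega
      have h3 : r ≤ r * h := Nat.le_mul_of_pos_right r (by omega)
      calc n ≤ r * h + r := h2
        _ ≤ r * h + r * h := by omega
        _ = 2 * r * h := by ring
    have hhpos : (0:ℝ) < (h:ℝ) := by exact_mod_cast hh1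
    set p : ℕ → ℝ := fun k => ∑ l : Fin r, (k.choose (l:ℕ) : ℝ) * x l with hpdef
    have hp : ∀ k, k < n → |p k| ≤ 1 := by
      intro k hk
      have h0 := hx ⟨0, hr⟩ k hk
      have e : ∑ l : Fin r,
          (if ((⟨0, hr⟩ : Fin r) : ℕ) ≤ (l : ℕ) then
            (Nat.choose k ((l : ℕ) - ((⟨0, hr⟩ : Fin r) : ℕ)) : ℝ) else 0) * x l = p k := by
        refine Finset.sum_congr rfl fun l _ => ?_
        simp
      rwa [e] at h0
    set c : ℕ → ℕ → ℝ := fun jv s => (((s*h).choose jv : ℕ) : ℝ) with hcdef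
    set f : ℕ → ℝ := fun s => p (s*h) with hfdef
    have hfc : ∀ m : ℕ, (fwdDiff (1:ℕ))^[m] f 0
        = ∑ l : Fin r, x l * (fwdDiff (1:ℕ))^[m] (c (l:ℕ)) 0 := by
      intro m
      have e : f = ∑ l : Fin r, x l • c (l:ℕ) := by
        funext s
        simp only [hfdef, hpdef, hcdef, Finset.sum_apply, Pi.smul_apply, smul_eq_mul]
        exact Finset.sum_congr rfl fun l _ => mul_comm _ _
      rw [e, fwdDiff_iter_finset_sum, Finset.sum_apply]
      exact Finset.sum_congr rfl fun l _ => by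
        rw [fwdDiff_iter_const_smul, Pi.smul_apply, smul_eq_mul]
    have hSm : ∀ m, m ≤ r - 1 → |(fwdDiff (1:ℕ))^[m] f 0| ≤ 2^r := by
      intro m hm
      have := fwdDiff_bound m f 1 (fun k hk => hp _ (hsh _ (le_trans hk hm)))
      calc |(fwdDiff (1:ℕ))^[m] f 0| ≤ 2^m * 1 := this
        _ ≤ 2^r := by
            rw [mul_one]
            exact pow_le_pow_right₀ (by norm_num) (by omega)
    have hTgt : ∀ m, m ≤ r - 1 → ∀ jv : ℕ,
        |(fwdDiff (1:ℕ))^[m] (c jv) 0| ≤ 2^r * ((r:ℝ)*h)^jv := by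
      intro m hm jv
      have hb : ∀ k, k ≤ m → |c jv k| ≤ ((r:ℝ)*h)^jv := by
        intro k hk
        rw [hcdef]
        simp only [Nat.abs_cast]
        have h1 : (k*h).choose jv ≤ (r*h)^jv :=
          le_trans (Nat.choose_le_choose jv (Nat.mul_le_mul_right h (by omega)))
            (Nat.choose_le_pow _ _)
        calc ((k*h).choose jv : ℝ) ≤ ((r*h : ℕ):ℝ)^jv := by exact_mod_cast h1
          _ = ((r:ℝ)*h)^jv := by push_cast; ring
      have := fwdDiff_bound m (c jv) (((r:ℝ)*h)^jv) hb
      calc |(fwdDiff (1:ℕ))^[m] (c jv) 0| ≤ 2^m * ((r:ℝ)*h)^jv := this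
        _ ≤ 2^r * ((r:ℝ)*h)^jv := by
            have : (2:ℝ)^m ≤ 2^r := pow_le_pow_right₀ (by norm_num) (by omega)
            have hpos : (0:ℝ) ≤ ((r:ℝ)*h)^jv := by positivity
            exact mul_le_mul_of_nonneg_right this hpos
    -- main downward induction
    have main : ∀ t : ℕ, ∀ m : Fin r, r - (m:ℕ) ≤ t →
        |x m| ≤ A^(r-(m:ℕ)) / (h:ℝ)^(m:ℕ) := by
      intro t
      induction t with
      | zero => intro m hm; exact absurd hm (by have := m.2; omega)
      | succ t IH =>
        intro m hm
        have hmr : (m:ℕ) ≤ r - 1 := by have := m.2; omega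
        have hiden := hfc (m:ℕ)
        set T : Fin r → ℝ := fun l => (fwdDiff (1:ℕ))^[(m:ℕ)] (c (l:ℕ)) 0 with hT
        have hsplit : ∑ l : Fin r, x l * T l
            = (∑ l ∈ univ.filter (fun l : Fin r => (m:ℕ) < (l:ℕ)), x l * T l)
              + x m * (h:ℝ)^(m:ℕ) := by
          rw [← Finset.sum_filter_add_sum_filter_not univ (fun l : Fin r => (m:ℕ) < (l:ℕ))
            (fun l => x l * T l)]
          congr 1
          rw [Finset.sum_eq_single_of_mem m (by simp)]
          · rw [hT]
            simp only []
            rw [key_eval h (m:ℕ) (m:ℕ) le_rfl, if_pos rfl]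
          · intro l hl hlm
            have hlm' : (l:ℕ) < (m:ℕ) := by
              have := (Finset.mem_filter.1 hl).2
              simp only [not_lt] at this
              have : (l:ℕ) ≤ (m:ℕ) := this
              have hne : (l:ℕ) ≠ (m:ℕ) := fun e => hlm (Fin.ext e)
              omega
            rw [hT]
            simp only []
            rw [key_eval h (m:ℕ) (l:ℕ) (le_of_lt hlm'), if_neg (by omega), mul_zero]
        have hxm : x m * (h:ℝ)^(m:ℕ) = (fwdDiff (1:ℕ))^[(m:ℕ)] f 0
            - ∑ l ∈ univ.filter (fun l : Fin r => (m:ℕ) < (l:ℕ)), x l * T l := by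
          rw [hiden, hsplit]; ring
        have hhm : (0:ℝ) < (h:ℝ)^(m:ℕ) := by positivity
        have hbound : |x m| * (h:ℝ)^(m:ℕ) ≤ A^(r-(m:ℕ)) := by
          have hterm : ∀ l ∈ univ.filter (fun l : Fin r => (m:ℕ) < (l:ℕ)),
              |x l * T l| ≤ 2^r * (r:ℝ)^r * A^(r-(m:ℕ)-1) := by
            intro l hl
            have hml : (m:ℕ) < (l:ℕ) := (Finset.mem_filter.1 hl).2
            have hIH : |x l| ≤ A^(r-(l:ℕ)) / (h:ℝ)^(l:ℕ) := IH l (by omega)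
            have hTl : |T l| ≤ 2^r * ((r:ℝ)*h)^(l:ℕ) := hTgt (m:ℕ) hmr (l:ℕ)
            have hpow : ((r:ℝ)*h)^(l:ℕ) = (r:ℝ)^(l:ℕ) * (h:ℝ)^(l:ℕ) := mul_pow _ _ _
            calc |x l * T l| = |x l| * |T l| := abs_mul _ _
              _ ≤ (A^(r-(l:ℕ)) / (h:ℝ)^(l:ℕ)) * (2^r * ((r:ℝ)*h)^(l:ℕ)) := by
                  exact mul_le_mul hIH hTl (abs_nonneg _) (by positivity)
              _ = 2^r * (r:ℝ)^(l:ℕ) * A^(r-(l:ℕ)) := by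
                  rw [hpow]; field_simp
              _ ≤ 2^r * (r:ℝ)^r * A^(r-(m:ℕ)-1) := by
                  have h1 : (r:ℝ)^(l:ℕ) ≤ (r:ℝ)^r :=
                    pow_le_pow_right₀ (by exact_mod_cast hr) (by omega)
                  have h2 : A^(r-(l:ℕ)) ≤ A^(r-(m:ℕ)-1) := pow_le_pow_right₀ hA1 (by omega)
                  have h3 : (0:ℝ) ≤ 2^r := by positivity
                  have h5 : (0:ℝ) ≤ A^(r-(l:ℕ)) := by positivity
                  exact mul_le_mul (mul_le_mul_of_nonneg_left h1 h3) h2 h5 (by positivity)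
          have hcard : ((univ.filter (fun l : Fin r => (m:ℕ) < (l:ℕ))).card : ℝ) ≤ r := by
            have := Finset.card_filter_le (univ : Finset (Fin r))
              (fun l : Fin r => (m:ℕ) < (l:ℕ))
            simp only [Finset.card_univ, Fintype.card_fin] at this
            exact_mod_cast this
          have hsum : |∑ l ∈ univ.filter (fun l : Fin r => (m:ℕ) < (l:ℕ)), x l * T l|
              ≤ (r:ℝ) * (2^r * (r:ℝ)^r * A^(r-(m:ℕ)-1)) := by
            refine le_trans (Finset.abs_sum_le_sum_abs _ _) ?_
            refine le_trans (Finset.sum_le_sum hterm) ?_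
            rw [Finset.sum_const, nsmul_eq_mul]
            exact mul_le_mul_of_nonneg_right hcard (by positivity)
          have hS := hSm (m:ℕ) hmr
          have habs : |x m * (h:ℝ)^(m:ℕ)| ≤ 2^r + (r:ℝ) * (2^r * (r:ℝ)^r * A^(r-(m:ℕ)-1)) := by
            rw [hxm]
            refine le_trans (abs_sub _ _) ?_
            exact add_le_add hS hsum
          have heq : |x m * (h:ℝ)^(m:ℕ)| = |x m| * (h:ℝ)^(m:ℕ) := by
            rw [abs_mul, abs_of_pos hhm]
          rw [heq] at habs
          refine le_trans habs ?_
          have hstep : (2:ℝ)^r + (r:ℝ) * (2^r * (r:ℝ)^r * A^(r-(m:ℕ)-1))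
              ≤ A^(r-(m:ℕ)-1) * A := by
            have hApow : (1:ℝ) ≤ A^(r-(m:ℕ)-1) := one_le_pow₀ hA1
            have e : (r:ℝ) * (2^r * (r:ℝ)^r * A^(r-(m:ℕ)-1))
                = 2^r * (r:ℝ)^(r+1) * A^(r-(m:ℕ)-1) := by rw [pow_succ]; ring
            rw [hA, e]
            have h6 : (2:ℝ)^r ≤ 2^r * A^(r-(m:ℕ)-1) :=
              le_mul_of_one_le_right (by positivity) hApow
            nlinarith [h6]
          refine le_trans hstep ?_
          rw [← pow_succ]
          have : r - (m:ℕ) - 1 + 1 = r - (m:ℕ) := by omega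
          rw [this]
        rw [le_div_iff₀ hhm]
        exact hbound
    -- conclude
    have hmain := main r j (by omega)
    rw [le_div_iff₀ hnpos]
    have h1 : |x j| * (h:ℝ)^(j:ℕ) ≤ A^r := by
      have := (le_div_iff₀ (by positivity : (0:ℝ) < (h:ℝ)^(j:ℕ))).1 hmain
      refine le_trans this ?_
      exact pow_le_pow_right₀ hA1 (by omega)
    have h2 : (n:ℝ)^(j:ℕ) ≤ (2*(r:ℝ)+1)^r * (h:ℝ)^(j:ℕ) := by
      have hn2 : (n:ℝ) ≤ (2*(r:ℝ)+1) * h := by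
        have hle : (n:ℝ) ≤ 2*(r:ℝ)*h := by exact_mod_cast hnh
        nlinarith
      have hb : (1:ℝ) ≤ 2*(r:ℝ)+1 := by
        have hh0 : (0:ℝ) ≤ (r:ℝ) := Nat.cast_nonneg r
        linarith
      calc (n:ℝ)^(j:ℕ) ≤ ((2*(r:ℝ)+1) * h)^(j:ℕ) := pow_le_pow_left₀ (by positivity) hn2 _
        _ = (2*(r:ℝ)+1)^(j:ℕ) * (h:ℝ)^(j:ℕ) := mul_pow _ _ _
        _ ≤ (2*(r:ℝ)+1)^r * (h:ℝ)^(j:ℕ) :=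
            mul_le_mul_of_nonneg_right (pow_le_pow_right₀ hb (by omega)) (by positivity)
    have hfin : (2*(r:ℝ)+1)^r * A^r ≤ A^r * (2*r+1)^r + ((4*r^2+1:ℕ):ℝ)^r + 1 := by
      have hc : (0:ℝ) ≤ ((4*r^2+1:ℕ):ℝ)^r := by positivity
      have he : (2*(r:ℝ)+1)^r * A^r = A^r * (2*(r:ℝ)+1)^r := mul_comm _ _
      linarith
    calc |x j| * (n:ℝ)^(j:ℕ) ≤ |x j| * ((2*(r:ℝ)+1)^r * (h:ℝ)^(j:ℕ)) :=
          mul_le_mul_of_nonneg_left h2 (abs_nonneg _)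
      _ = (2*(r:ℝ)+1)^r * (|x j| * (h:ℝ)^(j:ℕ)) := by ring
      _ ≤ (2*(r:ℝ)+1)^r * A^r := mul_le_mul_of_nonneg_left h1 (by positivity)
      _ ≤ A^r * (2*r+1)^r + ((4*r^2+1:ℕ):ℝ)^r + 1 := hfin
end

section
/- Let J_r be the r×r elementary unipotent Jordan block. There exist constants C, C' > 0 such that for every n ≥ 2, the Lebesgue measure of the set W_n = { x ∈ ℝʳ : ‖J_rᵏ x‖_∞ ≤ 1 for all 0 ≤ k < n } satisfies C · n^{-r(r-1)/2} ≤ |W_n| ≤ C' · n^{-r(r-1)/2}. -/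
open MeasureTheory

/-- The `r × r` elementary unipotent Jordan block: ones on the diagonal and
on the superdiagonal, zeros elsewhere. -/
def jordanBlock (r : ℕ) : Matrix (Fin r) (Fin r) ℝ :=
  Matrix.of fun i j => if (j : ℕ) = i ∨ (j : ℕ) = i + 1 then 1 else 0

open Finset Polynomial

lemma jordan_pow_entry (r : ℕ) : ∀ (k : ℕ) (i j : Fin r),
    (jordanBlock r ^ k) i j = if (i:ℕ) ≤ (j:ℕ) then (k.choose ((j:ℕ) - (i:ℕ)) : ℝ) else 0 := by
  intro k
  induction k with
  | zero =>
    intro i j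
    simp only [pow_zero, Matrix.one_apply]
    rcases eq_or_ne i j with h | h
    · subst h; simp
    · rw [if_neg h]
      split_ifs with h1
      · have hne : (j:ℕ) - (i:ℕ) ≠ 0 := fun hc => h (Fin.ext (by omega))
        rw [Nat.choose_eq_zero_of_lt (by omega)]; simp
      · rfl
  | succ k ih =>
    intro i j
    rw [pow_succ, Matrix.mul_apply]
    rcases Nat.eq_zero_or_pos (j:ℕ) with hj | hj
    · have hsum : ∀ l : Fin r, (jordanBlock r ^ k) i l * jordanBlock r l j
          = if l = j then (jordanBlock r ^ k) i j else 0 := by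
        intro l
        simp only [jordanBlock, Matrix.of_apply]
        by_cases h : l = j
        · rw [if_pos h, if_pos (Or.inl (by rw [h]) : (j:ℕ) = (l:ℕ) ∨ (j:ℕ) = (l:ℕ)+1), mul_one, h]
        · have hcond : ¬(((j:ℕ) = (l:ℕ)) ∨ ((j:ℕ) = (l:ℕ) + 1)) := by
            rintro (hc | hc)
            · exact h (Fin.ext hc.symm)
            · omega
          rw [if_neg hcond, if_neg h, mul_zero]
      rw [Finset.sum_congr rfl (fun l _ => hsum l), Finset.sum_ite_eq' univ j,
        if_pos (mem_univ j), ih]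
      by_cases hij : (i:ℕ) ≤ (j:ℕ)
      · rw [if_pos hij, if_pos hij]
        have : (j:ℕ) - (i:ℕ) = 0 := by omega
        rw [this, Nat.choose_zero_right, Nat.choose_zero_right]
      · rw [if_neg hij, if_neg hij]
    · have hjr : (j:ℕ) - 1 < r := by omega
      set c : Fin r := ⟨(j:ℕ) - 1, hjr⟩ with hc
      have hcv : (c:ℕ) = (j:ℕ) - 1 := rfl
      have hsum : ∀ l : Fin r, (jordanBlock r ^ k) i l * jordanBlock r l j
          = (if l = j then (jordanBlock r ^ k) i j else 0)
            + (if l = c then (jordanBlock r ^ k) i c else 0) := by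
        intro l
        simp only [jordanBlock, Matrix.of_apply]
        by_cases h1 : l = j
        · have hlc : l ≠ c := by
            intro h; apply_fun (Fin.val) at h; rw [hcv, h1] at h; omega
          rw [if_pos h1, if_neg hlc,
            if_pos (Or.inl (by rw [h1]) : (j:ℕ) = (l:ℕ) ∨ (j:ℕ) = (l:ℕ)+1), mul_one, h1, add_zero]
        · by_cases h2 : l = c
          · rw [if_neg h1, if_pos h2,
              if_pos (Or.inr (by rw [h2, hcv]; omega) : (j:ℕ) = (l:ℕ) ∨ (j:ℕ) = (l:ℕ)+1),
              mul_one, h2, zero_add]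
          · have hcond : ¬(((j:ℕ) = (l:ℕ)) ∨ ((j:ℕ) = (l:ℕ) + 1)) := by
              rintro (hd | hd)
              · exact h1 (Fin.ext hd.symm)
              · exact h2 (Fin.ext (by rw [hcv]; omega))
            rw [if_neg hcond, if_neg h1, if_neg h2, mul_zero, add_zero]
      rw [Finset.sum_congr rfl (fun l _ => hsum l), Finset.sum_add_distrib,
        Finset.sum_ite_eq' univ j, Finset.sum_ite_eq' univ c,
        if_pos (mem_univ j), if_pos (mem_univ c), ih, ih]
      by_cases hij : (i:ℕ) ≤ (c:ℕ)
      · have hij' : (i:ℕ) ≤ (j:ℕ) := by rw [hcv] at hij; omega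
        rw [if_pos hij, if_pos hij', if_pos hij', hcv]
        have h3 : (j:ℕ) - (i:ℕ) = ((j:ℕ) - 1 - (i:ℕ)) + 1 := by omega
        rw [h3, Nat.choose_succ_succ]
        push_cast
        ring
      · by_cases hij' : (i:ℕ) ≤ (j:ℕ)
        · rw [if_pos hij', if_neg hij, if_pos hij']
          have h3 : (j:ℕ) - (i:ℕ) = 0 := by rw [hcv] at hij; omega
          rw [h3]; simp
        · rw [if_neg hij, if_neg hij', if_neg hij']; simp

noncomputable def geomQ (t : ℕ) : ℝ[X] := ∑ i ∈ range t, (1 + X) ^ i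

lemma one_add_X_pow_sub_one (t : ℕ) : (1 + X : ℝ[X]) ^ t - 1 = geomQ t * X := by
  have h := geom_sum_mul (1 + X : ℝ[X]) t
  rw [add_sub_cancel_left] at h
  rw [← h]; rfl

lemma diff_sum_eq_coeff (t d m : ℕ) :
    ∑ j ∈ range (d + 1), (-1 : ℝ) ^ (d - j) * (d.choose j) * ((j * t).choose m)
      = (((1 + X : ℝ[X]) ^ t - 1) ^ d).coeff m := by
  rw [sub_pow, finset_sum_coeff]
  refine Finset.sum_congr rfl fun j hj => ?_
  rw [Finset.mem_range] at hj
  have h1 : ((1 + X : ℝ[X]) ^ t) ^ j = (1 + X) ^ (t * j) := by rw [← pow_mul]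
  have h2 : ((-1 : ℝ[X]) ^ (j + d) * ((1 + X) ^ t) ^ j * 1 ^ (d - j) * (d.choose j : ℝ[X]))
      = Polynomial.C ((-1 : ℝ) ^ (j + d) * (d.choose j)) * (1 + X) ^ (t * j) := by
    rw [h1, one_pow, mul_one]
    rw [map_mul, map_pow, map_neg, map_one, Polynomial.C_eq_natCast]
    ring
  rw [h2, coeff_C_mul, coeff_one_add_X_pow]
  have h3 : (-1 : ℝ) ^ (j + d) = (-1 : ℝ) ^ (d - j) := by
    rw [show j + d = (d - j) + 2 * j by omega, pow_add, pow_mul]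
    simp
  rw [h3, mul_comm t j]


lemma diff_coeff_lt (t d m : ℕ) (h : m < d) : (((1 + X : ℝ[X]) ^ t - 1) ^ d).coeff m = 0 := by
  rw [one_add_X_pow_sub_one, mul_pow, coeff_mul_X_pow', if_neg (by omega)]

lemma diff_coeff_eq (t d : ℕ) : (((1 + X : ℝ[X]) ^ t - 1) ^ d).coeff d = (t : ℝ) ^ d := by
  rw [one_add_X_pow_sub_one, mul_pow, coeff_mul_X_pow', if_pos le_rfl, Nat.sub_self,
    coeff_zero_eq_eval_zero, eval_pow, geomQ, eval_finset_sum]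
  simp

lemma jordan_mulVec (r k : ℕ) (x : Fin r → ℝ) (i : Fin r) :
    (jordanBlock r ^ k).mulVec x i
      = ∑ j : Fin r, (if (i:ℕ) ≤ (j:ℕ) then ((k.choose ((j:ℕ)-(i:ℕ)) : ℝ)) else 0) * x j := by
  rw [Matrix.mulVec, dotProduct]
  exact Finset.sum_congr rfl fun j _ => by rw [jordan_pow_entry]

lemma choose_le_pow_real (a m : ℕ) : ((a.choose m : ℝ)) ≤ (a:ℝ)^m := by
  exact_mod_cast Nat.choose_le_pow a m

noncomputable def Mc (r : ℕ) : ℝ := 2^r * (1 + (r:ℝ)^(r+1))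

lemma Mc_ge_one (r : ℕ) : 1 ≤ Mc r := by
  have h1 : (1:ℝ) ≤ 2^r := one_le_pow₀ (by norm_num)
  have h2 : (0:ℝ) ≤ (r:ℝ)^(r+1) := by positivity
  have h3 : (1:ℝ) ≤ 1 + (r:ℝ)^(r+1) := by linarith
  calc (1:ℝ) = 1 * 1 := by ring
    _ ≤ 2^r * (1 + (r:ℝ)^(r+1)) := mul_le_mul h1 h3 (by norm_num) (by positivity)

lemma Wset_coord_bound (r n : ℕ) (hr : 1 ≤ r) (hn : 2 * r ≤ n) (x : Fin r → ℝ)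
    (hx : ∀ k : ℕ, k < n → ‖(jordanBlock r ^ k).mulVec x‖ ≤ 1) :
    ∀ d : Fin r, |x d| ≤ Mc r ^ (r - (d:ℕ)) / ((n / r : ℕ) : ℝ) ^ (d:ℕ) := by
  set t : ℕ := n / r with htdef
  have ht1 : 1 ≤ t := (Nat.one_le_div_iff (by omega)).mpr (by omega)
  have htR : (0:ℝ) < (t:ℝ) := by exact_mod_cast ht1
  have hrt : r * t ≤ n := by rw [htdef, mul_comm]; exact Nat.div_mul_le_self n r
  set i0 : Fin r := ⟨0, hr⟩ with hi0
  set y : ℕ → ℝ := fun j => (jordanBlock r ^ (j * t)).mulVec x i0 with hy_def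
  have hy : ∀ j, j < r → |y j| ≤ 1 := by
    intro j hj
    have hlt : j * t < n := by
      have h1 : (j+1) * t ≤ r * t := Nat.mul_le_mul_right _ (by omega)
      have h2 : j * t + t = (j+1) * t := by ring
      omega
    calc |y j| = ‖(jordanBlock r ^ (j * t)).mulVec x i0‖ := (Real.norm_eq_abs _).symm
      _ ≤ ‖(jordanBlock r ^ (j * t)).mulVec x‖ := norm_le_pi_norm _ i0
      _ ≤ 1 := hx _ hlt
  have hexp : ∀ j : ℕ, y j = ∑ m : Fin r, (((j*t).choose (m:ℕ) : ℝ)) * x m := by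
    intro j
    rw [hy_def]
    simp only
    rw [jordan_mulVec]
    refine Finset.sum_congr rfl fun m _ => ?_
    rw [if_pos (Nat.zero_le _)]
    norm_num
  set S : ℕ → ℕ → ℝ := fun d m =>
    ∑ j ∈ range (d+1), (-1:ℝ)^(d-j) * (d.choose j) * ((j*t).choose m) with hS_def
  have hS0 : ∀ d m : ℕ, m < d → S d m = 0 := by
    intro d m h; rw [hS_def]; simp only
    rw [diff_sum_eq_coeff, diff_coeff_lt t d m h]
  have hSd : ∀ d : ℕ, S d d = (t:ℝ)^d := by
    intro d; rw [hS_def]; simp only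
    rw [diff_sum_eq_coeff, diff_coeff_eq]
  set D : ℕ → ℝ := fun d => ∑ j ∈ range (d+1), (-1:ℝ)^(d-j) * (d.choose j) * y j with hD_def
  have hkey : ∀ d : Fin r, (t:ℝ)^(d:ℕ) * x d =
      D (d:ℕ) - ∑ m ∈ univ.filter (fun m : Fin r => (d:ℕ) < (m:ℕ)), S (d:ℕ) (m:ℕ) * x m := by
    intro d
    have swap : D (d:ℕ) = ∑ m : Fin r, S (d:ℕ) (m:ℕ) * x m := by
      rw [hD_def]; simp only
      calc ∑ j ∈ range ((d:ℕ)+1), (-1:ℝ)^((d:ℕ)-j) * ((d:ℕ).choose j) * y j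
          = ∑ j ∈ range ((d:ℕ)+1), ∑ m : Fin r,
              (-1:ℝ)^((d:ℕ)-j) * ((d:ℕ).choose j) * (((j*t).choose (m:ℕ) : ℝ) * x m) := by
            refine Finset.sum_congr rfl fun j _ => ?_
            rw [hexp j, Finset.mul_sum]
        _ = ∑ m : Fin r, ∑ j ∈ range ((d:ℕ)+1),
              (-1:ℝ)^((d:ℕ)-j) * ((d:ℕ).choose j) * (((j*t).choose (m:ℕ) : ℝ) * x m) :=
            Finset.sum_comm
        _ = ∑ m : Fin r, S (d:ℕ) (m:ℕ) * x m := by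
            refine Finset.sum_congr rfl fun m _ => ?_
            rw [hS_def]; simp only
            rw [Finset.sum_mul]
            exact Finset.sum_congr rfl fun j _ => by ring
    rw [swap, ← Finset.sum_filter_add_sum_filter_not univ (fun m : Fin r => (d:ℕ) < (m:ℕ))]
    have h2 : ∑ m ∈ univ.filter (fun m : Fin r => ¬ (d:ℕ) < (m:ℕ)), S (d:ℕ) (m:ℕ) * x m
        = (t:ℝ)^(d:ℕ) * x d := by
      have hterm : ∀ m ∈ univ.filter (fun m : Fin r => ¬ (d:ℕ) < (m:ℕ)),
          S (d:ℕ) (m:ℕ) * x m = if m = d then (t:ℝ)^(d:ℕ) * x d else 0 := by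
        intro m hm
        rw [Finset.mem_filter] at hm
        rcases eq_or_ne m d with h | h
        · rw [if_pos h, h, hSd]
        · rw [if_neg h, hS0 _ _ (by
            have : (m:ℕ) ≠ (d:ℕ) := fun hc => h (Fin.ext hc)
            omega), zero_mul]
      rw [Finset.sum_congr rfl hterm, Finset.sum_ite_eq' _ d, if_pos (by simp)]
    rw [h2]; ring
  have hD_bound : ∀ d : ℕ, d < r → |D d| ≤ 2^r := by
    intro d hd
    rw [hD_def]; simp only
    calc |∑ j ∈ range (d+1), (-1:ℝ)^(d-j) * (d.choose j) * y j|
        ≤ ∑ j ∈ range (d+1), |(-1:ℝ)^(d-j) * (d.choose j) * y j| :=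
          Finset.abs_sum_le_sum_abs _ _
      _ ≤ ∑ j ∈ range (d+1), ((d.choose j : ℝ)) := by
          refine Finset.sum_le_sum fun j hj => ?_
          rw [Finset.mem_range] at hj
          rw [abs_mul, abs_mul, abs_pow, abs_neg, abs_one, one_pow, one_mul,
            Nat.abs_cast]
          calc ((d.choose j : ℝ)) * |y j| ≤ ((d.choose j : ℝ)) * 1 :=
                mul_le_mul_of_nonneg_left (hy j (by omega)) (Nat.cast_nonneg _)
            _ = _ := mul_one _
      _ = ((2^d : ℕ) : ℝ) := by rw [← Nat.sum_range_choose]; push_cast; ring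
      _ ≤ 2^r := by
          have : (2:ℕ)^d ≤ 2^r := Nat.pow_le_pow_right (by norm_num) (by omega)
          calc ((2^d : ℕ) : ℝ) ≤ ((2^r : ℕ) : ℝ) := by exact_mod_cast this
            _ = 2^r := by push_cast; ring
  have hS_bound : ∀ (d : ℕ) (m : Fin r), d < r → |S d (m:ℕ)| ≤ 2^r * (r:ℝ)^r * (t:ℝ)^(m:ℕ) := by
    intro d m hd
    rw [hS_def]; simp only
    calc |∑ j ∈ range (d+1), (-1:ℝ)^(d-j) * (d.choose j) * ((j*t).choose (m:ℕ))|
        ≤ ∑ j ∈ range (d+1), |(-1:ℝ)^(d-j) * (d.choose j) * ((j*t).choose (m:ℕ))| :=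
          Finset.abs_sum_le_sum_abs _ _
      _ ≤ ∑ j ∈ range (d+1), ((d.choose j : ℝ)) * ((r:ℝ)^r * (t:ℝ)^(m:ℕ)) := by
          refine Finset.sum_le_sum fun j hj => ?_
          rw [Finset.mem_range] at hj
          rw [abs_mul, abs_mul, abs_pow, abs_neg, abs_one, one_pow, one_mul,
            Nat.abs_cast, Nat.abs_cast]
          refine mul_le_mul_of_nonneg_left ?_ (Nat.cast_nonneg _)
          calc (((j*t).choose (m:ℕ) : ℝ)) ≤ ((j*t : ℕ) : ℝ)^(m:ℕ) := choose_le_pow_real _ _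
            _ ≤ ((r*t : ℕ) : ℝ)^(m:ℕ) := by
                refine pow_le_pow_left₀ (Nat.cast_nonneg _) ?_ _
                exact_mod_cast Nat.mul_le_mul_right t (by omega)
            _ = (r:ℝ)^(m:ℕ) * (t:ℝ)^(m:ℕ) := by push_cast; rw [mul_pow]
            _ ≤ (r:ℝ)^r * (t:ℝ)^(m:ℕ) := by
                refine mul_le_mul_of_nonneg_right ?_ (by positivity)
                exact pow_le_pow_right₀ (by exact_mod_cast hr) (by omega)
      _ = (∑ j ∈ range (d+1), ((d.choose j : ℝ))) * ((r:ℝ)^r * (t:ℝ)^(m:ℕ)) :=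
          (Finset.sum_mul _ _ _).symm
      _ ≤ (2:ℝ)^r * ((r:ℝ)^r * (t:ℝ)^(m:ℕ)) := by
          refine mul_le_mul_of_nonneg_right ?_ (by positivity)
          have h1 : ∑ j ∈ range (d+1), ((d.choose j : ℝ)) = ((2^d : ℕ) : ℝ) := by
            rw [← Nat.sum_range_choose]; push_cast; ring
          rw [h1]
          have : (2:ℕ)^d ≤ 2^r := Nat.pow_le_pow_right (by norm_num) (by omega)
          calc ((2^d : ℕ) : ℝ) ≤ ((2^r : ℕ) : ℝ) := by exact_mod_cast this
            _ = 2^r := by push_cast; ring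
      _ = 2^r * (r:ℝ)^r * (t:ℝ)^(m:ℕ) := by ring
  -- main downward induction
  have hMc := Mc_ge_one r
  have main : ∀ c : ℕ, ∀ d : Fin r, r - (d:ℕ) ≤ c → |x d| ≤ Mc r ^ (r - (d:ℕ)) / (t:ℝ)^(d:ℕ) := by
    intro c
    induction c with
    | zero => intro d hd; exact absurd hd (by have := d.isLt; omega)
    | succ c ih =>
      intro d _
      have hdr : (d:ℕ) < r := d.isLt
      have step1 : |(t:ℝ)^(d:ℕ) * x d| ≤
          2^r + ∑ m ∈ univ.filter (fun m : Fin r => (d:ℕ) < (m:ℕ)),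
            (2^r * (r:ℝ)^r * Mc r ^ (r - ((d:ℕ)+1))) := by
        rw [hkey d]
        calc |D (d:ℕ) - ∑ m ∈ univ.filter (fun m : Fin r => (d:ℕ) < (m:ℕ)), S (d:ℕ) (m:ℕ) * x m|
            ≤ |D (d:ℕ)| + |∑ m ∈ univ.filter (fun m : Fin r => (d:ℕ) < (m:ℕ)), S (d:ℕ) (m:ℕ) * x m| :=
              abs_sub _ _
          _ ≤ 2^r + ∑ m ∈ univ.filter (fun m : Fin r => (d:ℕ) < (m:ℕ)),
                (2^r * (r:ℝ)^r * Mc r ^ (r - ((d:ℕ)+1))) := by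
              refine add_le_add (hD_bound _ hdr) ?_
              calc |∑ m ∈ univ.filter (fun m : Fin r => (d:ℕ) < (m:ℕ)), S (d:ℕ) (m:ℕ) * x m|
                  ≤ ∑ m ∈ univ.filter (fun m : Fin r => (d:ℕ) < (m:ℕ)), |S (d:ℕ) (m:ℕ) * x m| :=
                    Finset.abs_sum_le_sum_abs _ _
                _ ≤ _ := by
                    refine Finset.sum_le_sum fun m hm => ?_
                    rw [Finset.mem_filter] at hm
                    have hdm : (d:ℕ) < (m:ℕ) := hm.2
                    have hxm : |x m| ≤ Mc r ^ (r - (m:ℕ)) / (t:ℝ)^(m:ℕ) :=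
                      ih m (by have := m.isLt; omega)
                    rw [abs_mul]
                    calc |S (d:ℕ) (m:ℕ)| * |x m|
                        ≤ (2^r * (r:ℝ)^r * (t:ℝ)^(m:ℕ)) * (Mc r ^ (r - (m:ℕ)) / (t:ℝ)^(m:ℕ)) := by
                          refine mul_le_mul (hS_bound _ _ hdr) hxm (abs_nonneg _) (by positivity)
                      _ = 2^r * (r:ℝ)^r * Mc r ^ (r - (m:ℕ)) := by
                          field_simp
                      _ ≤ 2^r * (r:ℝ)^r * Mc r ^ (r - ((d:ℕ)+1)) := by
                          refine mul_le_mul_of_nonneg_left ?_ (by positivity)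
                          exact pow_le_pow_right₀ hMc (by omega)
      have step2 : |(t:ℝ)^(d:ℕ) * x d| ≤ Mc r ^ (r - (d:ℕ)) := by
        have hcard : ((univ.filter (fun m : Fin r => (d:ℕ) < (m:ℕ))).card : ℝ) ≤ (r:ℝ) := by
          have h1 : (univ.filter (fun m : Fin r => (d:ℕ) < (m:ℕ))).card ≤ r := by
            calc _ ≤ (univ : Finset (Fin r)).card := Finset.card_filter_le _ _
              _ = r := by simp
          exact_mod_cast h1
        have hone : (1:ℝ) ≤ Mc r ^ (r - ((d:ℕ)+1)) := one_le_pow₀ hMc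
        calc |(t:ℝ)^(d:ℕ) * x d|
            ≤ 2^r + ∑ m ∈ univ.filter (fun m : Fin r => (d:ℕ) < (m:ℕ)),
                (2^r * (r:ℝ)^r * Mc r ^ (r - ((d:ℕ)+1))) := step1
          _ = 2^r + ((univ.filter (fun m : Fin r => (d:ℕ) < (m:ℕ))).card : ℝ)
                * (2^r * (r:ℝ)^r * Mc r ^ (r - ((d:ℕ)+1))) := by
              rw [Finset.sum_const, nsmul_eq_mul]
          _ ≤ 2^r * Mc r ^ (r - ((d:ℕ)+1)) + (r:ℝ) * (2^r * (r:ℝ)^r * Mc r ^ (r - ((d:ℕ)+1))) := by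
              refine add_le_add ?_ ?_
              · exact le_mul_of_one_le_right (by positivity) hone
              · refine mul_le_mul_of_nonneg_right hcard (by positivity)
          _ = (2^r * (1 + (r:ℝ)^(r+1))) * Mc r ^ (r - ((d:ℕ)+1)) := by
              rw [pow_succ]; ring
          _ = Mc r ^ (r - (d:ℕ)) := by
              rw [Mc]
              have : r - (d:ℕ) = (r - ((d:ℕ)+1)) + 1 := by omega
              rw [this, pow_succ]; ring
      have := step2
      rw [abs_mul, abs_pow, abs_of_pos htR] at this
      rw [le_div_iff₀ (by positivity)]
      linarith [this]
  intro d
  exact main (r - (d:ℕ)) d le_rfl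

-- lower bound : box inside W
lemma box_subset_W (r n : ℕ) (hr : 1 ≤ r) (hn : 1 ≤ n) (x : Fin r → ℝ)
    (hx : ∀ j : Fin r, |x j| ≤ (1/(r:ℝ)) * (1/(n:ℝ))^(j:ℕ)) :
    ∀ k : ℕ, k < n → ‖(jordanBlock r ^ k).mulVec x‖ ≤ 1 := by
  intro k hk
  rw [pi_norm_le_iff_of_nonneg zero_le_one]
  intro i
  rw [Real.norm_eq_abs, jordan_mulVec]
  have hnR : (1:ℝ) ≤ (n:ℝ) := by exact_mod_cast hn
  have hrR : (0:ℝ) < (r:ℝ) := by exact_mod_cast hr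
  calc |∑ j : Fin r, (if (i:ℕ) ≤ (j:ℕ) then ((k.choose ((j:ℕ)-(i:ℕ)) : ℝ)) else 0) * x j|
      ≤ ∑ j : Fin r, |(if (i:ℕ) ≤ (j:ℕ) then ((k.choose ((j:ℕ)-(i:ℕ)) : ℝ)) else 0) * x j| :=
        Finset.abs_sum_le_sum_abs _ _
    _ ≤ ∑ _j : Fin r, (1/(r:ℝ)) := by
        refine Finset.sum_le_sum fun j _ => ?_
        rw [abs_mul]
        by_cases hij : (i:ℕ) ≤ (j:ℕ)
        · rw [if_pos hij, Nat.abs_cast]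
          calc ((k.choose ((j:ℕ)-(i:ℕ)) : ℝ)) * |x j|
              ≤ (n:ℝ)^((j:ℕ)-(i:ℕ)) * ((1/(r:ℝ)) * (1/(n:ℝ))^(j:ℕ)) := by
                refine mul_le_mul ?_ (hx j) (abs_nonneg _) (by positivity)
                calc ((k.choose ((j:ℕ)-(i:ℕ)) : ℝ)) ≤ (k:ℝ)^((j:ℕ)-(i:ℕ)) :=
                      choose_le_pow_real _ _
                  _ ≤ (n:ℝ)^((j:ℕ)-(i:ℕ)) := by
                      refine pow_le_pow_left₀ (Nat.cast_nonneg _) ?_ _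
                      exact_mod_cast Nat.le_of_lt hk
            _ = (1/(r:ℝ)) * ((n:ℝ)^((j:ℕ)-(i:ℕ)) * (1/(n:ℝ))^(j:ℕ)) := by ring
            _ ≤ (1/(r:ℝ)) * 1 := by
                refine mul_le_mul_of_nonneg_left ?_ (by positivity)
                rw [one_div, inv_pow, ← div_eq_mul_inv, div_le_one (by positivity)]
                exact pow_le_pow_right₀ hnR (by omega)
            _ = 1/(r:ℝ) := mul_one _
        · rw [if_neg hij, abs_zero, zero_mul]
          positivity
    _ = 1 := by
        rw [Finset.sum_const, Finset.card_univ, Fintype.card_fin, nsmul_eq_mul]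
        field_simp

/- The norm on `Fin r → ℝ` is the sup norm. -/
theorem jordan_orbit_set_volume (r : ℕ) :
    ∃ C C' : ℝ, 0 < C ∧ 0 < C' ∧ ∀ n : ℕ, 2 ≤ n →
      ENNReal.ofReal (C / (n : ℝ) ^ (r * (r - 1) / 2)) ≤
          volume {x : Fin r → ℝ | ∀ k : ℕ, k < n → ‖(jordanBlock r ^ k).mulVec x‖ ≤ 1} ∧
        volume {x : Fin r → ℝ | ∀ k : ℕ, k < n → ‖(jordanBlock r ^ k).mulVec x‖ ≤ 1} ≤
          ENNReal.ofReal (C' / (n : ℝ) ^ (r * (r - 1) / 2)) := by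
  rcases Nat.eq_zero_or_pos r with hr0 | hr
  · subst hr0
    refine ⟨1, 1, one_pos, one_pos, fun n hn => ?_⟩
    have hset : {x : Fin 0 → ℝ | ∀ k : ℕ, k < n → ‖(jordanBlock 0 ^ k).mulVec x‖ ≤ 1}
        = Set.univ := by
      ext x
      simp only [Set.mem_setOf_eq, Set.mem_univ, iff_true]
      intro k _
      have h0 : (jordanBlock 0 ^ k).mulVec x = 0 := Subsingleton.elim _ _
      rw [h0, norm_zero]; exact zero_le_one
    have huniv : (Set.univ : Set (Fin 0 → ℝ)) = Set.Icc 0 0 := by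
      ext x
      simp only [Set.mem_univ, Set.mem_Icc, true_iff]
      constructor <;> · intro i; exact absurd i.isLt (by omega)
    have hvol : volume {x : Fin 0 → ℝ | ∀ k : ℕ, k < n → ‖(jordanBlock 0 ^ k).mulVec x‖ ≤ 1}
        = 1 := by
      rw [hset, huniv, Real.volume_Icc_pi]
      simp
    rw [hvol]
    norm_num
  -- main case r ≥ 1
  have hMc1 := Mc_ge_one r
  have hMc0 : (0:ℝ) < Mc r := by linarith
  set E : ℕ := r * (r - 1) / 2 with hE_def
  set K : ℝ := 2 * Mc r ^ r * (2*(r:ℝ))^r with hK_def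
  have hK : 0 < K := by
    refine mul_pos (mul_pos two_pos (pow_pos hMc0 r)) (pow_pos (by positivity) r)
  set C : ℝ := (2/(r:ℝ))^r with hC_def
  set C' : ℝ := K^r + 2^r * (2*(r:ℝ))^E with hC'_def
  have hrR : (0:ℝ) < (r:ℝ) := by exact_mod_cast hr
  have hr1R : (1:ℝ) ≤ (r:ℝ) := by exact_mod_cast hr
  have hC : 0 < C := by positivity
  have hC' : 0 < C' := by positivity
  have hsumE : ∑ j : Fin r, (j:ℕ) = E := by
    rw [Fin.sum_univ_eq_sum_range (fun i => i) r, hE_def, Finset.sum_range_id]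
  refine ⟨C, C', hC, hC', fun n hn => ?_⟩
  have hnR : (0:ℝ) < (n:ℝ) := by exact_mod_cast (by omega : 0 < n)
  constructor
  · -- LOWER BOUND
    set a : Fin r → ℝ := fun j => 1/(r:ℝ) * (1/(n:ℝ))^(j:ℕ) with ha_def
    have hsub : Set.Icc (-a) a ⊆
        {x : Fin r → ℝ | ∀ k : ℕ, k < n → ‖(jordanBlock r ^ k).mulVec x‖ ≤ 1} := by
      intro x hx
      rw [Set.mem_Icc] at hx
      exact box_subset_W r n hr (by omega) x
        (fun j => abs_le.mpr ⟨hx.1 j, hx.2 j⟩)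
    have hvol : volume (Set.Icc (-a) a) = ENNReal.ofReal (C / (n:ℝ)^E) := by
      rw [Real.volume_Icc_pi]
      have hfac : ∀ j : Fin r, a j - (-a) j = (2/(r:ℝ)) * (1/(n:ℝ))^(j:ℕ) := by
        intro j; simp only [Pi.neg_apply, ha_def]; ring
      calc ∏ j : Fin r, ENNReal.ofReal (a j - (-a) j)
          = ∏ j : Fin r, ENNReal.ofReal ((2/(r:ℝ)) * (1/(n:ℝ))^(j:ℕ)) := by
            exact Finset.prod_congr rfl fun j _ => by rw [hfac j]
        _ = ENNReal.ofReal (∏ j : Fin r, (2/(r:ℝ)) * (1/(n:ℝ))^(j:ℕ)) :=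
            (ENNReal.ofReal_prod_of_nonneg (fun j _ => by positivity)).symm
        _ = ENNReal.ofReal (C / (n:ℝ)^E) := by
            congr 1
            rw [Finset.prod_mul_distrib, Finset.prod_const, Finset.card_univ,
              Fintype.card_fin, Finset.prod_pow_eq_pow_sum, hsumE, hC_def]
            rw [one_div, inv_pow, div_eq_mul_inv]
            ring
    exact le_trans (le_of_eq hvol.symm) (measure_mono hsub)
  · -- UPPER BOUND
    by_cases h2r : 2 * r ≤ n
    · -- main estimate
      set t : ℕ := n / r with ht_def
      have ht1 : 1 ≤ t := (Nat.one_le_div_iff (by omega)).mpr (by omega)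
      have htR : (0:ℝ) < (t:ℝ) := by exact_mod_cast ht1
      have hnt : (n:ℝ) ≤ 2*(r:ℝ)*(t:ℝ) := by
        have hmod := Nat.div_add_mod n r
        rw [← ht_def] at hmod
        have hmod2 : n % r < r := Nat.mod_lt n (by omega)
        have h1 : n < r * t + r := by omega
        have h1R : (n:ℝ) < (r:ℝ)*(t:ℝ) + r := by exact_mod_cast h1
        have h2R : 2*(r:ℝ) ≤ (n:ℝ) := by exact_mod_cast h2r
        nlinarith
      set b : Fin r → ℝ := fun d => Mc r ^ (r - (d:ℕ)) / (t:ℝ)^(d:ℕ) with hb_def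
      have hsub : {x : Fin r → ℝ | ∀ k : ℕ, k < n → ‖(jordanBlock r ^ k).mulVec x‖ ≤ 1}
          ⊆ Set.Icc (-b) b := by
        intro x hx
        rw [Set.mem_setOf_eq] at hx
        have := Wset_coord_bound r n hr h2r x hx
        rw [Set.mem_Icc]
        constructor <;> intro d
        · simpa [hb_def] using (abs_le.mp (this d)).1
        · simpa [hb_def] using (abs_le.mp (this d)).2
      have hfacb : ∀ d : Fin r, b d - (-b) d ≤ K * (1/(n:ℝ))^(d:ℕ) := by
        intro d
        have hdr : (d:ℕ) ≤ r := le_of_lt d.isLt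
        have h1 : b d - (-b) d = 2 * (Mc r ^ (r - (d:ℕ)) / (t:ℝ)^(d:ℕ)) := by
          simp only [Pi.neg_apply, hb_def]; ring
        rw [h1]
        have h2 : Mc r ^ (r - (d:ℕ)) ≤ Mc r ^ r := pow_le_pow_right₀ hMc1 (by omega)
        have h3 : (1/(t:ℝ))^(d:ℕ) ≤ (2*(r:ℝ)/(n:ℝ))^(d:ℕ) := by
          refine pow_le_pow_left₀ (by positivity) ?_ _
          rw [div_le_div_iff₀ htR hnR]
          linarith
        have h4 : (2*(r:ℝ)/(n:ℝ))^(d:ℕ) = (2*(r:ℝ))^(d:ℕ) * (1/(n:ℝ))^(d:ℕ) := by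
          rw [div_pow, one_div, inv_pow, div_eq_mul_inv]
        have h5 : (2*(r:ℝ))^(d:ℕ) ≤ (2*(r:ℝ))^r :=
          pow_le_pow_right₀ (by linarith) (by omega)
        calc 2 * (Mc r ^ (r - (d:ℕ)) / (t:ℝ)^(d:ℕ))
            = 2 * Mc r ^ (r - (d:ℕ)) * (1/(t:ℝ))^(d:ℕ) := by
              rw [one_div, inv_pow]; ring
          _ ≤ 2 * Mc r ^ r * ((2*(r:ℝ))^(d:ℕ) * (1/(n:ℝ))^(d:ℕ)) := by
              rw [← h4]
              refine mul_le_mul (by nlinarith) h3 (by positivity) (by positivity)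
          _ ≤ 2 * Mc r ^ r * ((2*(r:ℝ))^r * (1/(n:ℝ))^(d:ℕ)) := by
              refine mul_le_mul_of_nonneg_left ?_ (by positivity)
              exact mul_le_mul_of_nonneg_right h5 (by positivity)
          _ = K * (1/(n:ℝ))^(d:ℕ) := by rw [hK_def]; ring
      have hbpos : ∀ d : Fin r, 0 ≤ b d - (-b) d := by
        intro d
        have : b d = Mc r ^ (r - (d:ℕ)) / (t:ℝ)^(d:ℕ) := rfl
        rw [Pi.neg_apply, this]
        have : (0:ℝ) ≤ Mc r ^ (r - (d:ℕ)) / (t:ℝ)^(d:ℕ) := by positivity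
        linarith
      calc volume {x : Fin r → ℝ | ∀ k : ℕ, k < n → ‖(jordanBlock r ^ k).mulVec x‖ ≤ 1}
          ≤ volume (Set.Icc (-b) b) := measure_mono hsub
        _ = ∏ d : Fin r, ENNReal.ofReal (b d - (-b) d) := Real.volume_Icc_pi
        _ ≤ ∏ d : Fin r, ENNReal.ofReal (K * (1/(n:ℝ))^(d:ℕ)) :=
            Finset.prod_le_prod' fun d _ => ENNReal.ofReal_le_ofReal (hfacb d)
        _ = ENNReal.ofReal (∏ d : Fin r, K * (1/(n:ℝ))^(d:ℕ)) :=
            (ENNReal.ofReal_prod_of_nonneg (fun d _ => by positivity)).symm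
        _ ≤ ENNReal.ofReal (C' / (n:ℝ)^E) := by
            refine ENNReal.ofReal_le_ofReal ?_
            rw [Finset.prod_mul_distrib, Finset.prod_const, Finset.card_univ,
              Fintype.card_fin, Finset.prod_pow_eq_pow_sum, hsumE]
            rw [one_div, inv_pow, ← one_div, ← div_eq_mul_one_div]
            have hKC : K^r ≤ C' := by
              rw [hC'_def]
              have h9 : (0:ℝ) ≤ 2^r*(2*(r:ℝ))^E := by positivity
              linarith
            gcongr

    · -- trivial estimate for n < 2r
      push_neg at h2r
      have hn2r : (n:ℝ) ≤ 2*(r:ℝ) := by exact_mod_cast (le_of_lt h2r)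
      have hsub : {x : Fin r → ℝ | ∀ k : ℕ, k < n → ‖(jordanBlock r ^ k).mulVec x‖ ≤ 1}
          ⊆ Set.Icc (-(fun _ : Fin r => (1:ℝ))) (fun _ : Fin r => (1:ℝ)) := by
        intro x hx
        rw [Set.mem_setOf_eq] at hx
        have h0 := hx 0 (by omega)
        rw [pow_zero, Matrix.one_mulVec] at h0
        have habs : ∀ j : Fin r, |x j| ≤ 1 := by
          intro j
          calc |x j| = ‖x j‖ := (Real.norm_eq_abs _).symm
            _ ≤ ‖x‖ := norm_le_pi_norm x j
            _ ≤ 1 := h0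
        rw [Set.mem_Icc]
        exact ⟨fun j => by have := (abs_le.mp (habs j)).1; simpa using this,
          fun j => (abs_le.mp (habs j)).2⟩
      calc volume {x : Fin r → ℝ | ∀ k : ℕ, k < n → ‖(jordanBlock r ^ k).mulVec x‖ ≤ 1}
          ≤ volume (Set.Icc (-(fun _ : Fin r => (1:ℝ))) (fun _ : Fin r => (1:ℝ))) :=
            measure_mono hsub
        _ = ∏ _d : Fin r, ENNReal.ofReal 2 := by
            rw [Real.volume_Icc_pi]
            exact Finset.prod_congr rfl fun d _ => by norm_num
        _ = ENNReal.ofReal (∏ _d : Fin r, (2:ℝ)) :=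
            (ENNReal.ofReal_prod_of_nonneg (fun d _ => by norm_num)).symm
        _ ≤ ENNReal.ofReal (C' / (n:ℝ)^E) := by
            refine ENNReal.ofReal_le_ofReal ?_
            rw [Finset.prod_const, Finset.card_univ, Fintype.card_fin]
            rw [le_div_iff₀ (by positivity)]
            calc (2:ℝ)^r * (n:ℝ)^E ≤ 2^r * (2*(r:ℝ))^E := by
                  refine mul_le_mul_of_nonneg_left ?_ (by positivity)
                  exact pow_le_pow_left₀ (by positivity) hn2r E
              _ ≤ C' := by
                  rw [hC'_def]
                  have : (0:ℝ) ≤ K^r := by positivity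
                  linarith
end

section
/- Let G be an s-step nilpotent group (G_{s+1} = {1} for the lower central series), τ, g ∈ G, and g(k) = [g⁻¹, τᵏ]. Then the s-th iterated difference of the sequence (g(k)) is identically the identity: D^s g(k) = 1 for every k ≥ 0. -/
/-- The lower central series with the indexing of the paper: `G₁ = G` and
`G_{j+1} = [G, G_j]`.  (The value at `0` is irrelevant; we set it to `⊤`.) -/
def lcs (G : Type*) [Group G] : ℕ → Subgroup G
  | 0 => ⊤
  | 1 => ⊤
  | (n + 2) => ⁅(⊤ : Subgroup G), lcs G (n + 1)⁆

/-- The difference operator on sequences in a group: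
`(Dh)(k) = h(k)⁻¹ h(k+1)`. -/
def diffOp {G : Type*} [Group G] (h : ℕ → G) : ℕ → G := fun k => (h k)⁻¹ * h (k + 1)

open scoped commutatorElement

/-!
Writing `[g⁻¹, τᵏ] = g⁻¹ · τᵏ g τ⁻ᵏ`, the sequence is a constant times the orbit of `g` under
conjugation by the powers of `τ`. The difference operator kills the constant and turns the orbit
of `c` into the orbit of `[c⁻¹, τ]`, so `D^j` of the sequence is, for `j ≥ 1`, the orbit of an
element of `G_{j+1}`; for `j = s` that element is `1`.
-/

theorem lcs_succ_eq_lowerCentralSeries {G : Type*} [Group G] (n : ℕ) :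
    lcs G (n + 1) = (⊤ : Subgroup G).lowerCentralSeries n := by
  induction n with
  | zero => rfl
  | succ n ih =>
    rw [Subgroup.lowerCentralSeries_succ, ← ih, Subgroup.commutator_comm]
    rfl

namespace Subgroup

variable {G : Type*} [Group G]

theorem commutator_inv_mem_lowerCentralSeries_succ {S : Subgroup G} {n : ℕ} {c : G}
    (hc : c ∈ S.lowerCentralSeries n) {τ : G} (hτ : τ ∈ S) :
    ⁅c⁻¹, τ⁆ ∈ S.lowerCentralSeries (n + 1) :=
  commutator_mem_commutator (inv_mem hc) hτ

end Subgroup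

section Difference

variable {G : Type*} [Group G]

theorem diffOp_mul_conj_pow (a τ c : G) :
    diffOp (fun k : ℕ => a * (τ ^ k * c * (τ ^ k)⁻¹))
      = fun k : ℕ => τ ^ k * ⁅c⁻¹, τ⁆ * (τ ^ k)⁻¹ := by
  funext k
  simp only [diffOp, pow_succ, commutatorElement_def]
  group

theorem exists_iterate_diffOp_conj_pow_eq {n : ℕ} {c : G}
    (hc : c ∈ (⊤ : Subgroup G).lowerCentralSeries n) (τ : G) (j : ℕ) :
    ∃ c' ∈ (⊤ : Subgroup G).lowerCentralSeries (n + j),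
      diffOp^[j] (fun k : ℕ => τ ^ k * c * (τ ^ k)⁻¹) = fun k : ℕ => τ ^ k * c' * (τ ^ k)⁻¹ := by
  induction j generalizing n c with
  | zero => exact ⟨c, hc, rfl⟩
  | succ j ih =>
    obtain ⟨c', hc', hiter⟩ := ih
      (Subgroup.commutator_inv_mem_lowerCentralSeries_succ hc (Subgroup.mem_top τ))
    refine ⟨c', by rwa [Nat.add_right_comm, Nat.add_assoc] at hc', ?_⟩
    have hdiff := diffOp_mul_conj_pow 1 τ c
    simp only [one_mul] at hdiff
    rw [Function.iterate_succ_apply, hdiff, hiter]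

theorem iterate_diffOp_commutator_pow_mem (τ g : G) (j k : ℕ) :
    diffOp^[j] (fun k : ℕ => ⁅g⁻¹, τ ^ k⁆) k ∈ (⊤ : Subgroup G).lowerCentralSeries j := by
  cases j with
  | zero => exact Subgroup.mem_top _
  | succ j =>
    have hseq : (fun k : ℕ => ⁅g⁻¹, τ ^ k⁆) = fun k : ℕ => g⁻¹ * (τ ^ k * g * (τ ^ k)⁻¹) := by
      funext k
      simp only [commutatorElement_def, inv_inv, mul_assoc]
    have hg : ⁅g⁻¹, τ⁆ ∈ (⊤ : Subgroup G).lowerCentralSeries 1 :=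
      Subgroup.commutator_inv_mem_lowerCentralSeries_succ (Subgroup.mem_top g) (Subgroup.mem_top τ)
    obtain ⟨c, hc, hiter⟩ := exists_iterate_diffOp_conj_pow_eq hg τ j
    rw [Function.iterate_succ_apply, hseq, diffOp_mul_conj_pow, hiter, Nat.add_comm]
    exact Subgroup.Normal.conj_mem inferInstance c hc (τ ^ k)

end Difference

theorem iterated_diff_trivial_of_nilpotent (G : Type*) [Group G] (s : ℕ)
    (hnil : lcs G (s + 1) = ⊥) (τ g : G) :
    ∀ k : ℕ, (diffOp^[s] (fun k : ℕ => ⁅g⁻¹, τ ^ k⁆)) k = 1 := by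
  intro k
  have hmem := iterate_diffOp_commutator_pow_mem τ g s k
  rwa [← lcs_succ_eq_lowerCentralSeries, hnil, Subgroup.mem_bot] at hmem
end
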